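/- Let G be a graph of order n and let k satisfy Z_+(G) ≤ k ≤ n. Then the k-PSD propagation time satisfies pt_+(G, k) ≤ ⌈(n − k)/2⌉. -/

import Mathlib

open SimpleGraph Set

variable {V : Type*}

/-- The subgraph of `G` obtained by deleting the vertices of `B`
(kept as isolated vertices). -/
def delVerts (G : SimpleGraph V) (B : Set V) : SimpleGraph V where
  Adj a b := G.Adj a b ∧ a ∉ B ∧ b ∉ B
  symm := ⟨fun _ _ ⟨h, ha, hb⟩ => ⟨h.symm, hb, ha⟩⟩
  loopless := ⟨fun a ⟨h, _, _⟩ => G.loopless.irrefl a h⟩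

/-- `u` may PSD-force `w` when the set of blue vertices is `B`:  `u` is blue, `w` is a white
neighbor of `u`, and `w` is the unique white neighbor of `u` in the component of `G - B`
containing `w`. -/
def PSDForce (G : SimpleGraph V) (B : Set V) (u w : V) : Prop :=
  u ∈ B ∧ w ∉ B ∧ G.Adj u w ∧
    ∀ x, G.Adj u x → x ∉ B → (delVerts G B).Reachable x w → x = w

/-- One round of simultaneous PSD forcing starting from blue set `B`. -/
def psdStep (G : SimpleGraph V) (B : Set V) : Set V :=
  B ∪ {w | ∃ u, PSDForce G B u w}

/-- `B` is a PSD forcing set of `G`. -/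
def IsPSDForcingSet (G : SimpleGraph V) (B : Set V) : Prop :=
  ∃ t, (psdStep G)^[t] B = Set.univ

/-- The PSD propagation time `pt_+(G; B)` of the set `B` in `G`. -/
noncomputable def psdPropTime (G : SimpleGraph V) (B : Set V) : ℕ :=
  sInf {t | (psdStep G)^[t] B = Set.univ}

/-- The PSD zero forcing number `Z_+(G)`. -/
noncomputable def psdZ (G : SimpleGraph V) : ℕ :=
  sInf {k | ∃ B : Set V, IsPSDForcingSet G B ∧ B.ncard = k}

/-- The `k`-PSD propagation time `pt_+(G, k)`: the minimum of `pt_+(G; B)` over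
PSD forcing sets `B` of size `k`. -/
noncomputable def psdPt (G : SimpleGraph V) (k : ℕ) : ℕ :=
  sInf {t | ∃ B : Set V, IsPSDForcingSet G B ∧ B.ncard = k ∧ psdPropTime G B = t}

/-- The PSD propagation time `pt_+(G) = pt_+(G, Z_+(G))`. -/
noncomputable def psdPtG (G : SimpleGraph V) : ℕ := psdPt G (psdZ G)

/-- The PSD propagation time of `B` within the induced subgraph `G[U]` (for `B ⊆ U`),
realized by making the vertices outside `U` isolated and initially blue. -/
noncomputable def psdPropTimeOn (G : SimpleGraph V) (U B : Set V) : ℕ :=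
  psdPropTime (delVerts G Uᶜ) (B ∪ Uᶜ)

/-- The vertex set of the component of `G - B` containing the white vertex `w`. -/
def compOf (G : SimpleGraph V) (B : Set V) (w : V) : Set V :=
  {x | x ∉ B ∧ (delVerts G B).Reachable x w}

/-!
A PSD forcing set never stalls inside a white component: the first vertex of a component `C` of
`G - B` to turn blue is forced by a vertex that was blue from the start, and that force is already
valid at `B`. Applied to the blue set after each round, this shows that every component of `G - B`
gains a blue vertex in every round until it is blue, so if all components of `G - B` have at most
`T` vertices, `B` finishes within `T` rounds.

To make the components small, take a forcing set `B` of size `k` and a component `C` with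
`2|C| ≥ (n - k) + 2`, and exchange the vertex `u` performing a first-round force into `C` with the
vertex `w` it forces. Since `w` is the only neighbour of `u` in `C`, in `G - (B - u + w)` the set
`C \ {w}` is separated from `u`; so `w` forces `u` back (the new set is still forcing), and every
new component lies in `C \ {w}` or in `{u} ∪ (Bᶜ \ C)`, both smaller than `C`.
-/

section Components

variable {G : SimpleGraph V} {B D : Set V} {w x y : V}

lemma delVerts_anti (h : B ⊆ D) : delVerts G D ≤ delVerts G B :=
  fun _ _ ⟨hab, ha, hb⟩ => ⟨hab, fun h' => ha (h h'), fun h' => hb (h h')⟩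

lemma mem_compOf_self (hw : w ∉ B) : w ∈ compOf G B w := ⟨hw, .refl w⟩

lemma compOf_eq_of_mem (hx : x ∈ compOf G B w) : compOf G B x = compOf G B w := by
  ext y
  exact ⟨fun ⟨hy, hr⟩ => ⟨hy, hr.trans hx.2⟩, fun ⟨hy, hr⟩ => ⟨hy, hr.trans hx.2.symm⟩⟩

lemma compOf_subset_compOf (h : B ⊆ D) : compOf G D w ⊆ compOf G B w :=
  fun _ ⟨hy, hr⟩ => ⟨fun h' => hy (h h'), hr.mono (delVerts_anti h)⟩

lemma mem_compOf_of_adj (hx : x ∈ compOf G B w) (hxy : G.Adj x y) (hy : y ∉ B) :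
    y ∈ compOf G B w :=
  ⟨hy, (Adj.reachable (⟨hxy.symm, hy, hx.1⟩ : (delVerts G B).Adj y x)).trans hx.2⟩

lemma reachable_delVerts_of_disjoint (hD : Disjoint (compOf G B w) D)
    (hx : x ∈ compOf G B w) : (delVerts G D).Reachable x w := by
  have hxw := (reachable_iff_reflTransGen x w).1 hx.2
  clear hx
  induction hxw using Relation.ReflTransGen.head_induction_on with
  | refl => exact .refl _
  | head hab hbw ih =>
    have hbw := (reachable_iff_reflTransGen _ _).2 hbw
    have ha : _ ∈ compOf G B w := ⟨hab.2.1, hab.reachable.trans hbw⟩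
    have hb : _ ∈ compOf G B w := ⟨hab.2.2, hbw⟩
    exact (Adj.reachable (G := delVerts G D)
      ⟨hab.1, disjoint_left.1 hD ha, disjoint_left.1 hD hb⟩).trans ih

end Components

section Propagation

variable {G : SimpleGraph V} {B D : Set V} {u w : V}

lemma subset_psdStep : B ⊆ psdStep G B := subset_union_left

lemma psdStep_mono : Monotone (psdStep G) := by
  intro B D h x hx
  by_cases hxD : x ∈ D
  · exact subset_psdStep hxD
  obtain hxB | ⟨u, hu, -, hadj, huniq⟩ := hx
  · exact absurd (h hxB) hxD
  refine .inr ⟨u, h hu, hxD, hadj, fun y hy hyD hr => ?_⟩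
  exact huniq y hy (fun hyB => hyD (h hyB)) (hr.mono (delVerts_anti h))

lemma subset_iterate_psdStep (t : ℕ) : B ⊆ (psdStep G)^[t] B :=
  Function.id_le_iterate_of_id_le (fun _ => subset_psdStep) t B

lemma IsPSDForcingSet.mono (hB : IsPSDForcingSet G B) (h : B ⊆ D) : IsPSDForcingSet G D :=
  let ⟨t, ht⟩ := hB
  ⟨t, eq_univ_of_univ_subset (ht ▸ psdStep_mono.iterate t h)⟩

lemma IsPSDForcingSet.iterate (hB : IsPSDForcingSet G B) (t : ℕ) :
    IsPSDForcingSet G ((psdStep G)^[t] B) :=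
  hB.mono (subset_iterate_psdStep t)

lemma IsPSDForcingSet.of_psdStep (h : IsPSDForcingSet G (psdStep G B)) : IsPSDForcingSet G B :=
  let ⟨t, ht⟩ := h
  ⟨t + 1, by rwa [Function.iterate_succ_apply]⟩

lemma PSDForce.of_subset (hF : PSDForce G D u w) (hBD : B ⊆ D) (hu : u ∈ B)
    (hdisj : Disjoint (compOf G B w) D) : PSDForce G B u w := by
  obtain ⟨-, hwD, hadj, huniq⟩ := hF
  refine ⟨hu, fun hw => hwD (hBD hw), hadj, fun x hx hxB hr => huniq x hx ?_ ?_⟩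
  · exact disjoint_left.1 hdisj ⟨hxB, hr⟩
  · exact reachable_delVerts_of_disjoint hdisj ⟨hxB, hr⟩

lemma IsPSDForcingSet.exists_psdForce_mem_compOf (hD : IsPSDForcingSet G D) (hw : w ∉ D) :
    ∃ u w', w' ∈ compOf G D w ∧ PSDForce G D u w' := by
  classical
  set C := compOf G D w
  have hex : ∃ r, ∃ y ∈ C, y ∈ (psdStep G)^[r] D :=
    let ⟨N, hN⟩ := hD
    ⟨N, w, mem_compOf_self hw, hN ▸ mem_univ w⟩
  obtain ⟨r, hr⟩ : ∃ r, Nat.find hex = r + 1 := by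
    refine Nat.exists_eq_succ_of_ne_zero fun h0 => ?_
    obtain ⟨y, hyC, hyD⟩ := (Nat.find_eq_zero hex).1 h0
    exact hyC.1 hyD
  have hdisj : Disjoint C ((psdStep G)^[r] D) :=
    disjoint_left.2 fun y hyC hy => Nat.find_min hex (by omega) ⟨y, hyC, hy⟩
  obtain ⟨w', hw'C, hw'⟩ := Nat.find_spec hex
  rw [hr, Function.iterate_succ_apply'] at hw'
  obtain hw'D | ⟨u, hF⟩ := hw'
  · exact absurd hw'D (disjoint_left.1 hdisj hw'C)
  have huD : u ∈ D := by
    by_contra huD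
    exact disjoint_left.1 hdisj (mem_compOf_of_adj hw'C hF.2.2.1.symm huD) hF.1
  refine ⟨u, w', hw'C, hF.of_subset (subset_iterate_psdStep r) huD ?_⟩
  rwa [compOf_eq_of_mem hw'C]

lemma exists_isPSDForcingSet_ncard_eq {k : ℕ} (hk1 : psdZ G ≤ k) (hk2 : k ≤ Nat.card V) :
    ∃ B, IsPSDForcingSet G B ∧ B.ncard = k := by
  have hne : {j | ∃ B : Set V, IsPSDForcingSet G B ∧ B.ncard = j}.Nonempty :=
    ⟨_, univ, ⟨0, rfl⟩, rfl⟩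
  obtain ⟨B0, hB0, hB0k⟩ := Nat.sInf_mem hne
  obtain ⟨B, hsub, -, hB⟩ := exists_subsuperset_card_eq (subset_univ B0)
    (hB0k.trans_le hk1) (by rwa [ncard_univ])
  exact ⟨B, hB0.mono hsub, hB⟩

variable [Finite V]

lemma IsPSDForcingSet.ncard_compOf_sdiff_iterate_add_le (hB : IsPSDForcingSet G B) :
    ∀ (t : ℕ) (x : V), x ∉ (psdStep G)^[t] B →
      (compOf G B x \ (psdStep G)^[t] B).ncard + t ≤ (compOf G B x).ncard
  | 0, x, _ => ncard_le_ncard sdiff_subset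
  | t + 1, x, hx => by
    have hxt : x ∉ (psdStep G)^[t] B := by
      rw [Function.iterate_succ_apply'] at hx
      exact fun h => hx (subset_psdStep h)
    obtain ⟨u, w, hw, hF⟩ := (hB.iterate t).exists_psdForce_mem_compOf hxt
    have hwC : w ∈ compOf G B x := compOf_subset_compOf (subset_iterate_psdStep t) hw
    have hw' : w ∈ (psdStep G)^[t + 1] B := by
      rw [Function.iterate_succ_apply']
      exact .inr ⟨u, hF⟩
    have hlt : (compOf G B x \ (psdStep G)^[t + 1] B).ncard
        < (compOf G B x \ (psdStep G)^[t] B).ncard := by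
      refine ncard_lt_ncard ?_
      have hsub := sdiff_subset_sdiff_right (s := compOf G B x)
        (psdStep_mono.monotone_iterate_of_le_map subset_psdStep (Nat.le_succ t) :
          (psdStep G)^[t] B ⊆ (psdStep G)^[t + 1] B)
      exact (ssubset_iff_of_subset hsub).2 ⟨w, ⟨hwC, hw.1⟩, fun h => h.2 hw'⟩
    have := hB.ncard_compOf_sdiff_iterate_add_le t x hxt
    omega

lemma IsPSDForcingSet.psdPropTime_le (hB : IsPSDForcingSet G B) {T : ℕ}
    (hT : ∀ x ∉ B, (compOf G B x).ncard ≤ T) : psdPropTime G B ≤ T := by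
  refine Nat.sInf_le (eq_univ_of_forall fun x => ?_)
  by_contra hx
  have hxB : x ∉ B := fun h => hx (subset_iterate_psdStep T h)
  have hpos : 0 < (compOf G B x \ (psdStep G)^[T] B).ncard :=
    (ncard_pos).2 ⟨x, mem_compOf_self hxB, hx⟩
  have := hB.ncard_compOf_sdiff_iterate_add_le T x hx
  have := hT x hxB
  omega

end Propagation

section Swap

variable {G : SimpleGraph V} {B : Set V} {u w x y : V}

def swapBlue (B : Set V) (u w : V) : Set V := insert w (B \ {u})

lemma mem_swapBlue : x ∈ swapBlue B u w ↔ x = w ∨ x ∈ B ∧ x ≠ u := by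
  simp [swapBlue]

lemma PSDForce.mem_compOf_sdiff_of_reachable_swapBlue (hF : PSDForce G B u w)
    (hx : x ∈ compOf G B w \ {w}) (hr : (delVerts G (swapBlue B u w)).Reachable x y) :
    y ∈ compOf G B w \ {w} := by
  have hxy := (reachable_iff_reflTransGen x y).1 hr
  clear hr
  induction hxy with
  | refl => exact hx
  | tail _ hab ih =>
    obtain ⟨hab, -, hb⟩ := hab
    obtain ⟨hbw, hbB⟩ : _ ≠ w ∧ (_ ∉ B ∨ _ = u) := by
      simpa only [mem_swapBlue, not_or, not_and_or, not_not] using hb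
    obtain hbB | rfl := hbB
    · exact ⟨mem_compOf_of_adj ih.1 hab hbB, hbw⟩
    · exact absurd (hF.2.2.2 _ hab.symm ih.1.1 ih.1.2) ih.2

lemma PSDForce.psdForce_swapBlue (hF : PSDForce G B u w) : PSDForce G (swapBlue B u w) w u := by
  have ⟨hu, hw, hadj, _⟩ := hF
  refine ⟨mem_swapBlue.2 (.inl rfl), fun h => ?_, hadj.symm, fun x hx hxB' hr => ?_⟩
  · obtain h | ⟨-, h⟩ := mem_swapBlue.1 h
    exacts [hadj.ne h, h rfl]
  by_contra hxu
  have hxB : x ∉ B := fun hxB => hxB' (mem_swapBlue.2 (.inr ⟨hxB, hxu⟩))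
  have hxw : x ≠ w := fun h => hxB' (mem_swapBlue.2 (.inl h))
  have hxC := mem_compOf_of_adj (mem_compOf_self hw) hx hxB
  exact (hF.mem_compOf_sdiff_of_reachable_swapBlue ⟨hxC, hxw⟩ hr).1.1 hu

lemma PSDForce.isPSDForcingSet_swapBlue (hF : PSDForce G B u w) (hB : IsPSDForcingSet G B) :
    IsPSDForcingSet G (swapBlue B u w) := by
  refine (hB.mono fun x hx => ?_).of_psdStep
  by_cases hxu : x = u
  · exact .inr ⟨w, hxu ▸ hF.psdForce_swapBlue⟩
  · exact subset_psdStep (mem_swapBlue.2 (.inr ⟨hx, hxu⟩))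

variable [Finite V]

lemma ncard_swapBlue (hu : u ∈ B) (hw : w ∉ B) :
    (swapBlue B u w).ncard = B.ncard := by
  have hpos : 0 < B.ncard := (ncard_pos).2 ⟨u, hu⟩
  rw [swapBlue, ncard_insert_of_notMem fun h => hw h.1, ncard_sdiff_singleton_of_mem hu]
  omega

lemma PSDForce.ncard_compOf_swapBlue_le (hF : PSDForce G B u w) :
    (compOf G (swapBlue B u w) x).ncard ≤
      max ((compOf G B w).ncard - 1) ((Bᶜ).ncard - (compOf G B w).ncard + 1) := by
  set C := compOf G B w
  by_cases hxC : x ∈ C \ {w}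
  · refine le_max_of_le_left ?_
    rw [← ncard_sdiff_singleton_of_mem (mem_compOf_self hF.2.1)]
    exact ncard_le_ncard fun y hy => hF.mem_compOf_sdiff_of_reachable_swapBlue hxC hy.2.symm
  refine le_max_of_le_right ?_
  have hsub : compOf G (swapBlue B u w) x ⊆ insert u (Bᶜ \ C) := by
    rintro y ⟨hyB', hyx⟩
    by_cases hyu : y = u
    · exact .inl hyu
    have hyB : y ∉ B := fun hyB => hyB' (mem_swapBlue.2 (.inr ⟨hyB, hyu⟩))
    have hyw : y ≠ w := fun h => hyB' (mem_swapBlue.2 (.inl h))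
    exact .inr ⟨hyB, fun hyC => hxC (hF.mem_compOf_sdiff_of_reachable_swapBlue ⟨hyC, hyw⟩ hyx)⟩
  calc (compOf G (swapBlue B u w) x).ncard ≤ (insert u (Bᶜ \ C)).ncard := ncard_le_ncard hsub
    _ ≤ (Bᶜ \ C).ncard + 1 := ncard_insert_le _ _
    _ = (Bᶜ).ncard - C.ncard + 1 := by rw [ncard_sdiff fun y hy => hy.1]

lemma IsPSDForcingSet.exists_ncard_compOf_lt (hB : IsPSDForcingSet G B) (hw : w ∉ B)
    (hC : (Bᶜ).ncard + 2 ≤ 2 * (compOf G B w).ncard) :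
    ∃ B', IsPSDForcingSet G B' ∧ B'.ncard = B.ncard ∧
      ∀ x, (compOf G B' x).ncard < (compOf G B w).ncard := by
  obtain ⟨u, w', hw', hF⟩ := hB.exists_psdForce_mem_compOf hw
  refine ⟨swapBlue B u w', hF.isPSDForcingSet_swapBlue hB, ncard_swapBlue hF.1 hF.2.1, fun x => ?_⟩
  have hpos : 0 < (compOf G B w).ncard := (ncard_pos).2 ⟨w, mem_compOf_self hw⟩
  have := hF.ncard_compOf_swapBlue_le (x := x)
  rw [compOf_eq_of_mem hw'] at this
  have hCB : (compOf G B w).ncard ≤ (Bᶜ).ncard := ncard_le_ncard fun y hy => hy.1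
  omega

lemma IsPSDForcingSet.exists_ncard_compOf_le (hB : IsPSDForcingSet G B) {T : ℕ}
    (hT : Nat.card V - B.ncard ≤ 2 * T) :
    ∃ B', IsPSDForcingSet G B' ∧ B'.ncard = B.ncard ∧ ∀ x ∉ B', (compOf G B' x).ncard ≤ T := by
  classical
  have hex : ∃ s, ∃ B', IsPSDForcingSet G B' ∧ B'.ncard = B.ncard ∧
      ∀ x ∉ B', (compOf G B' x).ncard ≤ s :=
    ⟨Nat.card V, B, hB, rfl, fun x _ => ncard_le_card _⟩
  obtain ⟨B', hB', hcard, hle⟩ := Nat.find_spec hex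
  by_contra! hTs
  have hsT : T < Nat.find hex :=
    let ⟨x, hx, hTx⟩ := hTs B' hB' hcard
    hTx.trans_le (hle x hx)
  -- `Nat.find hex` is the least achievable bound; a component attaining it can be swapped down
  have hmin := Nat.find_min hex (m := Nat.find hex - 1) (by omega)
  push Not at hmin
  obtain ⟨w, hw, hwC⟩ := hmin B' hB' hcard
  have hC : (B'ᶜ).ncard + 2 ≤ 2 * (compOf G B' w).ncard := by
    rw [ncard_compl, hcard]
    omega
  obtain ⟨B'', hB'', hcard'', hlt⟩ := hB'.exists_ncard_compOf_lt hw hC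
  obtain ⟨x, -, hx⟩ := hmin B'' hB'' (hcard''.trans hcard)
  have := hle w hw
  have := hlt x
  omega

end Swap

/-- for `Z_+(G) ≤ k ≤ n`, `pt_+(G,k) ≤ ⌈(n-k)/2⌉`. -/
theorem stmt5 [Fintype V] (G : SimpleGraph V) (k : ℕ)
    (hk1 : psdZ G ≤ k) (hk2 : k ≤ Fintype.card V) :
    psdPt G k ≤ (Fintype.card V - k + 1) / 2 := by
  rw [← Nat.card_eq_fintype_card] at hk2 ⊢
  obtain ⟨B, hB, hBk⟩ := exists_isPSDForcingSet_ncard_eq hk1 hk2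
  obtain ⟨B', hB', hB'k, hcomp⟩ :=
    hB.exists_ncard_compOf_le (T := (Nat.card V - k + 1) / 2) (by omega)
  calc psdPt G k ≤ psdPropTime G B' := Nat.sInf_le ⟨B', hB', hB'k.trans hBk, rfl⟩
    _ ≤ (Nat.card V - k + 1) / 2 := hB'.psdPropTime_le hcomp
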